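/- Let P be the probability measure on ℝ with P({1/k}) = 1/2^k for integers k ≥ 1. The fifth quantization error equals Er[5,∞) where Er[5,∞) = ∑_{k=5}^∞ (1/2^k)(1/k − a)² with a = (∑_{k≥5} 1/(k 2^k))/(∑_{k≥5} 1/2^k), attained at the set {a, 1/4, 1/3, 1/2, 1}; in particular the strict inequalities Er[4,6] > Er[5,∞) and Er[6,∞) + Er[4,5] > Er[5,∞) hold, where Er[k,ℓ] denotes the analogous conditional error over {1/k, …, 1/ℓ}. -/

import Mathlib

/-- Distortion error of a nonempty finite set α for the measure P({1/k}) = 1/2^k, k ≥ 1. -/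
noncomputable def errR (α : Finset ℝ) (h : α.Nonempty) : ℝ :=
  ∑' k : ℕ, (1/2^(k+1) : ℝ) * α.inf' h (fun a => (1/(k+1 : ℝ) - a)^2)

/-- Conditional expectation E(X | X ∈ {1/j : k ≤ j ≤ l}). -/
noncomputable def avR (k l : ℕ) : ℝ :=
  (∑ j ∈ Finset.Icc k l, (1/2^j : ℝ) * (1/(j : ℝ))) / (∑ j ∈ Finset.Icc k l, (1/2^j : ℝ))

/-- Conditional expectation E(X | X ∈ {1/k : k ≥ m}). -/
noncomputable def avRTail (m : ℕ) : ℝ :=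
  (∑' k : ℕ, (1/2^(k+m) : ℝ) * (1/(k+m : ℝ))) / (∑' k : ℕ, (1/2^(k+m) : ℝ))

/-- Er[k,l]: conditional quantization error over {1/k,…,1/l}. -/
noncomputable def erR (k l : ℕ) : ℝ :=
  ∑ j ∈ Finset.Icc k l, (1/2^j : ℝ) * (1/(j : ℝ) - avR k l)^2

/-- Er[m,∞): conditional quantization error over {1/k : k ≥ m}. -/
noncomputable def erRTail (m : ℕ) : ℝ :=
  ∑' k : ℕ, (1/2^(k+m) : ℝ) * (1/(k+m : ℝ) - avRTail m)^2

/-!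
Send every atom `1/k` to its nearest point in a set `α` of at most five points; this assignment is
antitone in the atom. If two of the atoms `1, 1/2, 1/3, 1/4` share a point, or `1/4, 1/5, 1/6` all
do, the error is at least one of `Er[1,2], Er[2,3], Er[3,4], Er[4,6]`, each larger than
`Er[5,∞) < 6.5·10⁻⁵`. Otherwise the atoms `1, …, 1/4` use four distinct points, so at most one
point is left for all later atoms. Since a weighted mean minimises the weighted squared deviation,
either that point serves every `1/k` with `k ≥ 5` and the error is at least `Er[5,∞)`, or `1/4` and
`1/5` share a point and the error is at least `Er[4,5] + Er[6,∞) ≥ Er[4,5] + Er[6,12] > Er[5,∞)`.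
The set `{a, 1/4, 1/3, 1/2, 1}` fixes `1, …, 1/4` and sends the remaining atoms to their mean `a`,
so its error is exactly `Er[5,∞)`.
-/

open Finset

theorem tsum_mul_sub_mean_sq_le {ι : Type*} {w x : ι → ℝ} (hw : Summable w)
    (hwx : Summable fun i => w i * x i) (hwx2 : Summable fun i => w i * x i ^ 2)
    (hW : 0 < ∑' i, w i) (a : ℝ) :
    ∑' i, w i * (x i - (∑' i, w i * x i) / ∑' i, w i) ^ 2 ≤ ∑' i, w i * (x i - a) ^ 2 := by
  have expand : ∀ c, ∑' i, w i * (x i - c) ^ 2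
      = ∑' i, w i * x i ^ 2 - 2 * c * ∑' i, w i * x i + c ^ 2 * ∑' i, w i := by
    intro c
    rw [← tsum_mul_left, ← tsum_mul_left, ← hwx2.tsum_sub (hwx.mul_left _),
      ← (hwx2.sub (hwx.mul_left _)).tsum_add (hw.mul_left _)]
    exact tsum_congr fun i => by ring
  rw [expand, expand]
  set W := ∑' i, w i
  set S := ∑' i, w i * x i
  set c := S / W
  have hS : S = c * W := (div_mul_cancel₀ S hW.ne').symm
  have key : (2 * c * S - c ^ 2 * W) - (2 * a * S - a ^ 2 * W) = W * (a - c) ^ 2 := by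
    rw [hS]; ring
  linarith [mul_nonneg hW.le (sq_nonneg (a - c))]

section DistinctValues

variable {β : Type*} [LinearOrder β] {f : ℕ → β}

lemma Antitone.card_image_range_lt (hf : Antitone f) {m k : ℕ} (hmk : m ≤ k) (h : f k < f m) :
    #((range (m + 1)).image f) < #((range (k + 1)).image f) := by
  refine card_lt_card ((ssubset_iff_of_subset
    (image_subset_image (range_subset_range.2 (by omega)))).2 ⟨f k, mem_image_of_mem f
      (self_mem_range_succ k), ?_⟩)
  simp only [mem_image, mem_range, not_exists, not_and]
  intro i hi hik
  exact (h.trans_le (hf (Nat.lt_succ_iff.1 hi))).ne hik.symm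

lemma Antitone.eq_of_card_le (hf : Antitone f) {s : Finset β} (hs : ∀ k, f k ∈ s) {m : ℕ}
    (hm : #s ≤ #((range (m + 1)).image f)) {k : ℕ} (hk : m ≤ k) : f k = f m := by
  refine le_antisymm (hf hk) (not_lt.1 fun h => ?_)
  have hsub : (range (k + 1)).image f ⊆ s := image_subset_iff.2 fun i _ => hs i
  have := card_le_card hsub
  have := hf.card_image_range_lt hk h
  omega

end DistinctValues

noncomputable def atomError (j : ℕ) (a : ℝ) : ℝ := 1 / 2 ^ j * (1 / (j : ℝ) - a) ^ 2

lemma atomError_nonneg (j : ℕ) (a : ℝ) : 0 ≤ atomError j a := by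
  unfold atomError; positivity

lemma summable_one_div_two_pow_add (m : ℕ) : Summable fun k : ℕ => (1 : ℝ) / 2 ^ (k + m) := by
  simp only [← one_div_pow]
  exact (summable_nat_add_iff m).2 summable_geometric_two

lemma summable_one_div_two_pow_add_mul {g : ℕ → ℝ} {C : ℝ} (hg : ∀ k, |g k| ≤ C) (m : ℕ) :
    Summable fun k : ℕ => 1 / 2 ^ (k + m) * g k := by
  refine ((summable_one_div_two_pow_add m).mul_right C).of_norm_bounded fun k => ?_
  rw [norm_mul, Real.norm_eq_abs, Real.norm_eq_abs, abs_of_pos (by positivity)]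
  exact mul_le_mul_of_nonneg_left (hg k) (by positivity)

lemma abs_one_div_natCast_le_one (j : ℕ) : |1 / (j : ℝ)| ≤ 1 := by
  rw [abs_of_nonneg (by positivity), one_div]
  exact Nat.cast_inv_le_one j

lemma summable_atomError {q : ℕ → ℝ} {C : ℝ} (hq : ∀ k, |q k| ≤ C) (m : ℕ) :
    Summable fun k => atomError (k + m) (q k) := by
  refine summable_one_div_two_pow_add_mul (C := (1 + C) ^ 2) (fun k => ?_) m
  have h : |1 / ((k + m : ℕ) : ℝ) - q k| ≤ 1 + C :=
    (abs_sub _ _).trans (add_le_add (abs_one_div_natCast_le_one _) (hq k))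
  rw [abs_of_nonneg (sq_nonneg _), ← sq_abs]
  exact pow_le_pow_left₀ (abs_nonneg _) h 2

lemma erRTail_eq_tsum_atomError (m : ℕ) :
    erRTail m = ∑' k, atomError (k + m) (avRTail m) := by
  simp only [erRTail, atomError, Nat.cast_add]

lemma erRTail_le (m : ℕ) (a : ℝ) : erRTail m ≤ ∑' k, atomError (k + m) a := by
  have hx : ∀ k : ℕ, |1 / ((k : ℝ) + m)| ≤ 1 := fun k => by
    simpa using abs_one_div_natCast_le_one (k + m)
  have hW : 0 < ∑' k : ℕ, (1 : ℝ) / 2 ^ (k + m) :=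
    (summable_one_div_two_pow_add m).tsum_pos (fun _ => by positivity) 0 (by positivity)
  refine (tsum_mul_sub_mean_sq_le (summable_one_div_two_pow_add m)
    (summable_one_div_two_pow_add_mul hx m)
    (summable_one_div_two_pow_add_mul (C := 1) (fun k => ?_) m) hW a).trans_eq ?_
  · rw [abs_pow]; exact pow_le_one₀ (abs_nonneg _) (hx k)
  · simp only [atomError, Nat.cast_add]

lemma erR_le {k l : ℕ} (hkl : k ≤ l) (p : ℝ) : erR k l ≤ ∑ j ∈ Icc k l, atomError j p := by
  have hW : 0 < ∑ j ∈ Icc k l, (1 : ℝ) / 2 ^ j :=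
    sum_pos (fun _ _ => by positivity) (nonempty_Icc.2 hkl)
  have h := tsum_mul_sub_mean_sq_le (ι := Icc k l) (w := fun j => (1 : ℝ) / 2 ^ (j : ℕ))
    (x := fun j => 1 / ((j : ℕ) : ℝ)) .of_finite .of_finite .of_finite
    (by rwa [Finset.tsum_subtype (Icc k l) fun j => (1 : ℝ) / 2 ^ j]) p
  rw [Finset.tsum_subtype (Icc k l) fun j => (1 : ℝ) / 2 ^ j * (1 / (j : ℝ)),
    Finset.tsum_subtype (Icc k l) fun j => (1 : ℝ) / 2 ^ j] at h
  rw [erR, ← Finset.tsum_subtype, ← Finset.tsum_subtype]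
  exact h

lemma sum_Icc_add_right {M : Type*} [AddCommMonoid M] (f : ℕ → M) (a b c : ℕ) :
    ∑ j ∈ Icc (a + c) (b + c), f j = ∑ k ∈ Icc a b, f (k + c) := by
  rw [← map_add_right_Icc, sum_map]
  rfl

lemma erR_le_erRTail (m n : ℕ) : erR m (n + m) ≤ erRTail m :=
  calc erR m (n + m) ≤ ∑ j ∈ Icc m (n + m), atomError j (avRTail m) := erR_le (by omega) _
    _ = ∑ k ∈ Icc 0 n, atomError (k + m) (avRTail m) := by
      simpa using sum_Icc_add_right (fun j => atomError j (avRTail m)) 0 n m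
    _ ≤ ∑' k, atomError (k + m) (avRTail m) :=
      (summable_atomError (fun _ => le_rfl) m).sum_le_tsum _ fun _ _ => atomError_nonneg _ _
    _ = erRTail m := (erRTail_eq_tsum_atomError m).symm

lemma tsum_one_div_two_pow_add (m : ℕ) : ∑' k : ℕ, (1 : ℝ) / 2 ^ (k + m) = 2 / 2 ^ m := by
  rw [← tsum_geometric_two' (2 / 2 ^ m)]
  exact tsum_congr fun k => by rw [pow_add]; field_simp

lemma tsum_atomError_le (m n : ℕ) (hnm : 0 < n + m) {a : ℝ} (ha : 1 / ((n + m : ℕ) : ℝ) ≤ 2 * a) :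
    ∑' k, atomError (k + m) a ≤ ∑ k ∈ range n, atomError (k + m) a + a ^ 2 * (2 / 2 ^ (n + m)) := by
  rw [← (summable_atomError (fun _ => le_rfl) m).sum_add_tsum_nat_add n]
  gcongr
  simp only [add_assoc]
  calc ∑' k, atomError (k + (n + m)) a ≤ ∑' k : ℕ, 1 / 2 ^ (k + (n + m)) * a ^ 2 := by
        refine (summable_atomError (fun _ => le_rfl) (n + m)).tsum_le_tsum (fun k => ?_)
          ((summable_one_div_two_pow_add _).mul_right _)
        refine mul_le_mul_of_nonneg_left ?_ (by positivity)
        have hx : 1 / ((k + (n + m) : ℕ) : ℝ) ≤ 1 / ((n + m : ℕ) : ℝ) :=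
          one_div_le_one_div_of_le (by exact_mod_cast hnm) (by exact_mod_cast Nat.le_add_left _ _)
        have hx0 : 0 ≤ 1 / ((k + (n + m) : ℕ) : ℝ) := by positivity
        nlinarith
    _ = a ^ 2 * (2 / 2 ^ (n + m)) := by rw [tsum_mul_right, tsum_one_div_two_pow_add, mul_comm]

-- `87 / 500` is close to `avRTail 5 ≈ 0.1738`.
lemma erRTail_five_lt : erRTail 5 < 13 / 200000 := by
  refine (erRTail_le 5 (87 / 500)).trans_lt
    ((tsum_atomError_le 5 10 (a := 87 / 500) (by norm_num) ?_).trans_lt ?_)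
  · norm_num
  · norm_num [atomError, sum_range_succ]

lemma erR_one_two : erR 1 2 = 1 / 24 := by
  norm_num [erR, avR, sum_Icc_succ_top]

lemma erR_two_three : erR 2 3 = 1 / 432 := by
  norm_num [erR, avR, sum_Icc_succ_top]

lemma erR_three_four : erR 3 4 = 1 / 3456 := by
  norm_num [erR, avR, sum_Icc_succ_top]

lemma erR_four_five : erR 4 5 = 1 / 19200 := by
  norm_num [erR, avR, sum_Icc_succ_top]

lemma erR_four_six : erR 4 6 = 1 / 8960 := by
  norm_num [erR, avR, sum_Icc_succ_top]

lemma erR_six_twelve_gt : 3 / 200000 < erR 6 12 := by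
  norm_num [erR, avR, sum_Icc_succ_top]

section EqOn

variable {f : ℕ → ℝ}

lemma erR_le_sum_range_of_eqOn {i j n : ℕ} {p : ℝ} (hij : i ≤ j) (hjn : j < n)
    (hf : ∀ k ∈ Icc i j, f k = p) : erR (i + 1) (j + 1) ≤ ∑ k ∈ range n, atomError (k + 1) (f k) :=
  calc erR (i + 1) (j + 1) ≤ ∑ l ∈ Icc (i + 1) (j + 1), atomError l p := erR_le (by omega) p
    _ = ∑ k ∈ Icc i j, atomError (k + 1) (f k) := by
      rw [sum_Icc_add_right]
      exact sum_congr rfl fun k hk => by rw [hf k hk]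
    _ ≤ ∑ k ∈ range n, atomError (k + 1) (f k) :=
      sum_le_sum_of_subset_of_nonneg (fun k hk => mem_range.2 (by simp only [mem_Icc] at hk; omega))
        fun _ _ _ => atomError_nonneg _ _

lemma erRTail_le_tsum_of_eqOn {n : ℕ} {p : ℝ} (hf : ∀ k, n ≤ k → f k = p) :
    erRTail (n + 1) ≤ ∑' k, atomError (k + n + 1) (f (k + n)) :=
  (erRTail_le (n + 1) p).trans_eq
    (tsum_congr fun k => by rw [hf (k + n) (Nat.le_add_left n k), add_assoc])

end EqOn

section Nearest

variable {α : Finset ℝ} (h : α.Nonempty)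

noncomputable def nearest (x : ℝ) : ℝ :=
  (α.exists_mem_eq_inf' h fun a => (x - a) ^ 2).choose

lemma nearest_mem (x : ℝ) : nearest h x ∈ α :=
  (α.exists_mem_eq_inf' h fun a => (x - a) ^ 2).choose_spec.1

lemma inf'_sq_sub_eq_nearest (x : ℝ) :
    α.inf' h (fun a => (x - a) ^ 2) = (x - nearest h x) ^ 2 :=
  (α.exists_mem_eq_inf' h fun a => (x - a) ^ 2).choose_spec.2

lemma sq_sub_nearest_le (x : ℝ) {b : ℝ} (hb : b ∈ α) : (x - nearest h x) ^ 2 ≤ (x - b) ^ 2 := by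
  rw [← inf'_sq_sub_eq_nearest]
  exact inf'_le _ hb

lemma monotone_nearest : Monotone (nearest h) := by
  intro x y hxy
  rcases hxy.eq_or_lt with rfl | hlt
  · exact le_rfl
  by_contra! hgt
  have hx := sq_sub_nearest_le h x (nearest_mem h y)
  have hy := sq_sub_nearest_le h y (nearest_mem h x)
  nlinarith

-- `k` is 0-indexed, as in `errR`: the atom is `1 / (k + 1)`.
noncomputable def nearestAtom (k : ℕ) : ℝ := nearest h (1 / ((k : ℝ) + 1))

lemma antitone_nearestAtom : Antitone (nearestAtom h) :=
  (monotone_nearest h).comp_antitone fun i j hij =>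
    one_div_le_one_div_of_le (by positivity) (by exact_mod_cast Nat.add_le_add_right hij 1)

lemma abs_le_sum_abs_of_mem {b : ℝ} (hb : b ∈ α) : |b| ≤ ∑ a ∈ α, |a| :=
  single_le_sum (fun a _ => abs_nonneg a) hb

lemma summable_atomError_nearestAtom : Summable fun k => atomError (k + 1) (nearestAtom h k) :=
  summable_atomError (fun _ => abs_le_sum_abs_of_mem (nearest_mem h _)) 1

lemma errR_eq_tsum_nearestAtom : errR α h = ∑' k, atomError (k + 1) (nearestAtom h k) := by
  simp only [errR, atomError, nearestAtom, inf'_sq_sub_eq_nearest, Nat.cast_add_one]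

lemma errR_le_tsum {q : ℕ → ℝ} (hq : ∀ k, q k ∈ α) : errR α h ≤ ∑' k, atomError (k + 1) (q k) := by
  rw [errR_eq_tsum_nearestAtom]
  refine (summable_atomError_nearestAtom h).tsum_le_tsum (fun k => ?_)
    (summable_atomError (fun k => abs_le_sum_abs_of_mem (hq k)) 1)
  refine mul_le_mul_of_nonneg_left ?_ (by positivity)
  push_cast
  exact sq_sub_nearest_le h _ (hq k)

lemma errR_eq_sum_range_add_tsum (n : ℕ) :
    errR α h = ∑ k ∈ range n, atomError (k + 1) (nearestAtom h k)
      + ∑' k, atomError (k + n + 1) (nearestAtom h (k + n)) := by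
  rw [errR_eq_tsum_nearestAtom]
  exact ((summable_atomError_nearestAtom h).sum_add_tsum_nat_add n).symm

lemma erR_le_errR_of_eqOn {i j : ℕ} (hij : i ≤ j)
    (hf : ∀ k ∈ Icc i j, nearestAtom h k = nearestAtom h i) : erR (i + 1) (j + 1) ≤ errR α h := by
  rw [errR_eq_sum_range_add_tsum h (j + 1)]
  have htail : 0 ≤ ∑' k, atomError (k + (j + 1) + 1) (nearestAtom h (k + (j + 1))) :=
    tsum_nonneg fun _ => atomError_nonneg _ _
  linarith [erR_le_sum_range_of_eqOn hij (Nat.lt_succ_self j) hf]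

lemma sum_range_add_erRTail_le_errR {n : ℕ} (hf : ∀ k, n ≤ k → nearestAtom h k = nearestAtom h n) :
    ∑ k ∈ range n, atomError (k + 1) (nearestAtom h k) + erRTail (n + 1) ≤ errR α h := by
  rw [errR_eq_sum_range_add_tsum h n]
  exact add_le_add_right (erRTail_le_tsum_of_eqOn hf) _

lemma erRTail_five_le_errR_of_lt (hc : #α ≤ 5) (h10 : nearestAtom h 1 < nearestAtom h 0)
    (h21 : nearestAtom h 2 < nearestAtom h 1) (h32 : nearestAtom h 3 < nearestAtom h 2) :
    erRTail 5 ≤ errR α h := by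
  set f := nearestAtom h
  have hf : Antitone f := antitone_nearestAtom h
  have hconst : ∀ m, 5 ≤ #((range (m + 1)).image f) → ∀ k, m ≤ k → f k = f m :=
    fun m hm k hk => hf.eq_of_card_le (fun _ => nearest_mem h _) (hc.trans hm) hk
  have hcard : 4 ≤ #((range 4).image f) := by
    have h1 : #((range 1).image f) = 1 := by simp
    have h2 : #((range 1).image f) < #((range 2).image f) :=
      hf.card_image_range_lt (by norm_num) h10
    have h3 : #((range 2).image f) < #((range 3).image f) :=
      hf.card_image_range_lt (by norm_num) h21
    have h4 : #((range 3).image f) < #((range 4).image f) :=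
      hf.card_image_range_lt (by norm_num) h32
    omega
  rcases (hf (Nat.le_succ 3)).eq_or_lt with h43 | h43
  · rcases (hf (Nat.le_succ 4)).eq_or_lt with h54 | h54
    · have hrun := erR_le_errR_of_eqOn h (i := 3) (j := 5) (by norm_num) fun k hk => by
        obtain rfl | rfl | rfl : k = 3 ∨ k = 4 ∨ k = 5 := by simp only [mem_Icc] at hk; omega
        · rfl
        · exact h43
        · exact h54.trans h43
      linarith [erRTail_five_lt, erR_four_six]
    · have h5 : #((range 4).image f) < #((range 6).image f) :=
        hf.card_image_range_lt (by norm_num) (h54.trans_eq h43)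
      have hhead := erR_le_sum_range_of_eqOn (f := f) (i := 3) (j := 4) (n := 5) (p := f 3)
        (by norm_num) (by norm_num) fun k hk => by
          obtain rfl | rfl : k = 3 ∨ k = 4 := by simp only [mem_Icc] at hk; omega
          · rfl
          · exact h43
      have hsplit := sum_range_add_erRTail_le_errR h
        (hconst 5 (by omega : 5 ≤ #((range 6).image f)))
      linarith [erRTail_five_lt, erR_four_five, erR_le_erRTail 6 6, erR_six_twelve_gt]
  · have h4 : #((range 4).image f) < #((range 5).image f) :=
      hf.card_image_range_lt (by norm_num) h43
    have hsplit := sum_range_add_erRTail_le_errR h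
      (hconst 4 (by omega : 5 ≤ #((range 5).image f)))
    have hhead : 0 ≤ ∑ k ∈ range 4, atomError (k + 1) (f k) :=
      sum_nonneg fun _ _ => atomError_nonneg _ _
    linarith

theorem erRTail_five_le_errR (hc : #α ≤ 5) : erRTail 5 ≤ errR α h := by
  have hf := antitone_nearestAtom h
  have hpair : ∀ i, nearestAtom h (i + 1) = nearestAtom h i → erR (i + 1) (i + 2) ≤ errR α h :=
    fun i he => erR_le_errR_of_eqOn h (Nat.le_succ i) fun k hk => by
      obtain rfl | rfl : k = i ∨ k = i + 1 := by simp only [mem_Icc] at hk; omega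
      · rfl
      · exact he
  rcases (hf (Nat.le_succ 0)).eq_or_lt with h10 | h10
  · linarith [hpair 0 h10, erR_one_two, erRTail_five_lt]
  rcases (hf (Nat.le_succ 1)).eq_or_lt with h21 | h21
  · linarith [hpair 1 h21, erR_two_three, erRTail_five_lt]
  rcases (hf (Nat.le_succ 2)).eq_or_lt with h32 | h32
  · linarith [hpair 2 h32, erR_three_four, erRTail_five_lt]
  exact erRTail_five_le_errR_of_lt h hc h10 h21 h32

end Nearest

lemma errR_le_erRTail_five (h : ({avRTail 5, 1/4, 1/3, 1/2, 1} : Finset ℝ).Nonempty) :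
    errR {avRTail 5, 1/4, 1/3, 1/2, 1} h ≤ erRTail 5 := by
  set q : ℕ → ℝ := fun k => if k < 4 then 1 / ((k : ℝ) + 1) else avRTail 5
  have hq : ∀ k, q k ∈ ({avRTail 5, 1/4, 1/3, 1/2, 1} : Finset ℝ) := by
    intro k
    by_cases hk : k < 4
    · interval_cases k <;> norm_num [q]
    · simp [q, hk]
  calc errR _ h ≤ ∑' k, atomError (k + 1) (q k) := errR_le_tsum h hq
    _ = ∑ k ∈ range 4, atomError (k + 1) (q k) + ∑' k, atomError (k + 4 + 1) (q (k + 4)) :=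
      ((summable_atomError (fun k => abs_le_sum_abs_of_mem (hq k)) 1).sum_add_tsum_nat_add 4).symm
    _ = erRTail 5 := by
      have hhead : ∑ k ∈ range 4, atomError (k + 1) (q k) = 0 := by
        norm_num [sum_range_succ, atomError, q]
      have htail : ∀ k, atomError (k + 4 + 1) (q (k + 4)) = atomError (k + 5) (avRTail 5) :=
        fun k => by simp [q, add_assoc]
      rw [hhead, zero_add, erRTail_eq_tsum_atomError]
      exact tsum_congr htail

theorem stmt18 :
    sInf {v : ℝ | ∃ (α : Finset ℝ) (h : α.Nonempty), α.card ≤ 5 ∧ v = errR α h}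
      = erRTail 5 ∧
    errR {avRTail 5, 1/4, 1/3, 1/2, 1} (by simp) = erRTail 5 ∧
    erR 4 6 > erRTail 5 ∧
    erRTail 6 + erR 4 5 > erRTail 5 := by
  have hne : ({avRTail 5, 1/4, 1/3, 1/2, 1} : Finset ℝ).Nonempty := by simp
  have hcard : #({avRTail 5, 1/4, 1/3, 1/2, 1} : Finset ℝ) ≤ 5 := card_le_five
  have hattain : errR {avRTail 5, 1/4, 1/3, 1/2, 1} hne = erRTail 5 :=
    le_antisymm (errR_le_erRTail_five hne) (erRTail_five_le_errR hne hcard)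
  refine ⟨IsLeast.csInf_eq ⟨⟨_, hne, hcard, hattain.symm⟩, ?_⟩, hattain, ?_, ?_⟩
  · rintro v ⟨α, h, hα, rfl⟩
    exact erRTail_five_le_errR h hα
  · linarith [erRTail_five_lt, erR_four_six]
  · linarith [erRTail_five_lt, erR_four_five, erR_le_erRTail 6 6, erR_six_twelve_gt]
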